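/- arXiv:1103.1610 — 3 statements merged into one kernel-verified Lean document; each statement's English description precedes it below -/
import Mathlib

section
/- Every solvable group of finite abelian section rank has, for each natural number n, only finitely many subgroups of index n (i.e., belongs to the class ℱ𝒮). -/
/-!
Common definitions for formalizing "Cohomology and profinite topologies for solvable
groups of finite rank" (K. Lorensen).

Group cohomology is defined via inhomogeneous cochains.  The continuous cohomology of the
pro-`p` (resp. profinite) completion of `G` with coefficients in a finite discrete module is
the direct limit, over the normal subgroups `N` of finite `p`-power (resp. finite) index
acting trivially on the module, of the cohomology of the quotients `G ⧸ N`; accordingly, the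
statement that the completion map induces an isomorphism on cohomology is rendered as:
the canonical (inflation) maps from this directed system to `H^*(G, M)` are jointly
surjective, and any class of the system killed in `H^*(G, M)` is killed at a deeper level of
the system.
-/

open Function TensorProduct

universe u v

namespace GoodProfinite

variable {G H : Type u} {M : Type v}

/-- The group structure (under composition) on additive automorphisms, as in the older Mathlib. -/
instance addAutGroup (A : Type*) [Add A] : Group (AddAut A) where
  mul g h := AddEquiv.trans h g
  one := AddEquiv.refl _
  inv := AddEquiv.symm
  mul_assoc _ _ _ := rfl
  one_mul _ := rfl
  mul_one _ := rfl
  inv_mul_cancel := AddEquiv.self_trans_symm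

/-- The differential on inhomogeneous cochains of a group `G` with coefficients in a
`G`-module `M` (the action given by `ρ : G →* AddAut M`). -/
def cochainD [Group G] [AddCommGroup M] (ρ : G →* AddAut M) (n : ℕ) :
    ((Fin n → G) → M) →+ ((Fin (n + 1) → G) → M) :=
  AddMonoidHom.mk'
    (fun f g =>
      ρ (g 0) (f fun i => g i.succ) +
        ∑ j : Fin (n + 1), (-1 : ℤ) ^ ((j : ℕ) + 1) • f (Fin.contractNth j (· * ·) g))
    (by
      intro a b
      funext g
      simp only [Pi.add_apply, map_add, smul_add, Finset.sum_add_distrib]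
      abel)

/-- The `n`-cocycles. -/
def cocycleGroup [Group G] [AddCommGroup M] (ρ : G →* AddAut M) (n : ℕ) :
    AddSubgroup ((Fin n → G) → M) :=
  (cochainD ρ n).ker

/-- The `n`-coboundaries. -/
def coboundaryGroup [Group G] [AddCommGroup M] (ρ : G →* AddAut M) :
    (n : ℕ) → AddSubgroup ((Fin n → G) → M)
  | 0 => ⊥
  | n + 1 => (cochainD ρ n).range

/-- The `n`-th group cohomology of `G` with coefficients in the `G`-module `M`. -/
def groupCoh [Group G] [AddCommGroup M] (ρ : G →* AddAut M) (n : ℕ) : Type (max u v) :=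
  cocycleGroup ρ n ⧸ (coboundaryGroup ρ n).addSubgroupOf (cocycleGroup ρ n)

instance [Group G] [AddCommGroup M] (ρ : G →* AddAut M) (n : ℕ) :
    AddCommGroup (groupCoh ρ n) :=
  inferInstanceAs (AddCommGroup (_ ⧸ _))

/-- Precomposition of cochains with a group homomorphism. -/
def precompCochain [Group G] [Group H] [AddCommGroup M] (f : G →* H) (n : ℕ) :
    ((Fin n → H) → M) →+ ((Fin n → G) → M) :=
  AddMonoidHom.mk' (fun c g => c fun i => f (g i)) (fun _ _ => rfl)

lemma comp_contractNth [Group G] [Group H] (f : G →* H) {n : ℕ} (j : Fin (n + 1))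
    (g : Fin (n + 1) → G) :
    (fun k => f (Fin.contractNth j (· * ·) g k)) =
      Fin.contractNth j (· * ·) fun i => f (g i) := by
  funext k
  unfold Fin.contractNth
  split_ifs <;> simp [map_mul]

lemma cochainD_precomp [Group G] [Group H] [AddCommGroup M] (f : G →* H)
    (ρ : H →* AddAut M) (ρ' : G →* AddAut M) (hcomp : ∀ g, ρ' g = ρ (f g)) (n : ℕ)
    (c : (Fin n → H) → M) :
    cochainD ρ' n (precompCochain f n c) = precompCochain f (n + 1) (cochainD ρ n c) := by
  funext g
  show ρ' (g 0) (c fun i => f (g i.succ)) +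
      ∑ j : Fin (n + 1), (-1 : ℤ) ^ ((j : ℕ) + 1) •
        c (fun i => f (Fin.contractNth j (· * ·) g i)) =
    ρ (f (g 0)) (c fun i => f (g i.succ)) +
      ∑ j : Fin (n + 1), (-1 : ℤ) ^ ((j : ℕ) + 1) •
        c (Fin.contractNth j (· * ·) fun i => f (g i))
  rw [hcomp]
  congr 1
  refine Finset.sum_congr rfl fun j _ => ?_
  rw [comp_contractNth]

/-- The map on cocycles induced by a group homomorphism with compatible actions. -/
def cocycleMap [Group G] [Group H] [AddCommGroup M] (f : G →* H) (ρ : H →* AddAut M)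
    (ρ' : G →* AddAut M) (hcomp : ∀ g, ρ' g = ρ (f g)) (n : ℕ) :
    cocycleGroup ρ n →+ cocycleGroup ρ' n :=
  AddMonoidHom.codRestrict ((precompCochain f n).comp (cocycleGroup ρ n).subtype) _
    (fun x => by
      have hx : cochainD ρ n x.1 = 0 := x.2
      show precompCochain f n x.1 ∈ (cochainD ρ' n).ker
      rw [AddMonoidHom.mem_ker, cochainD_precomp f ρ ρ' hcomp, hx, map_zero])

/-- The map `H^n(H, M) → H^n(G, M)` on group cohomology induced by a group homomorphism
`f : G →* H` and compatible actions (`ρ' = ρ ∘ f`); e.g. inflation maps. -/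
def cohMap [Group G] [Group H] [AddCommGroup M] (f : G →* H) (ρ : H →* AddAut M)
    (ρ' : G →* AddAut M) (hcomp : ∀ g, ρ' g = ρ (f g)) (n : ℕ) :
    groupCoh ρ n →+ groupCoh ρ' n :=
  QuotientAddGroup.map _ _ (cocycleMap f ρ ρ' hcomp n)
    (by
      intro x hx
      rw [AddSubgroup.mem_addSubgroupOf] at hx
      rw [AddSubgroup.mem_comap, AddSubgroup.mem_addSubgroupOf]
      match n, x, hx with
      | 0, x, hx =>
          have : x.1 = 0 := hx
          show (precompCochain f 0) x.1 ∈ (⊥ : AddSubgroup _)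
          rw [this, map_zero]
          exact AddSubgroup.mem_bot.mpr rfl
      | (m + 1), x, hx =>
          obtain ⟨b, hb⟩ := hx
          show (precompCochain f (m + 1)) x.1 ∈ (cochainD ρ' m).range
          exact ⟨precompCochain f m b, by rw [cochainD_precomp f ρ ρ' hcomp, hb]⟩)

/-- The action of `G ⧸ N` on `M` induced by an action of `G` on which `N` acts trivially. -/
def quotAut [Group G] [AddCommGroup M] (ρ : G →* AddAut M) (N : Subgroup G) [N.Normal]
    (h : ∀ x ∈ N, ρ x = 1) : G ⧸ N →* AddAut M :=
  QuotientGroup.lift N ρ h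

/-- The natural projection `G ⧸ N' →* G ⧸ N` when `N' ≤ N`. -/
def quotMapHom [Group G] (N N' : Subgroup G) [N.Normal] [N'.Normal] (hle : N' ≤ N) :
    G ⧸ N' →* G ⧸ N :=
  QuotientGroup.map N' N (MonoidHom.id G) fun _ hx => hle hx

lemma quotAut_comp_quotMap [Group G] [AddCommGroup M] (ρ : G →* AddAut M)
    (N N' : Subgroup G) [N.Normal] [N'.Normal] (hle : N' ≤ N) (h : ∀ x ∈ N, ρ x = 1) :
    ∀ x : G ⧸ N', quotAut ρ N' (fun g hg => h g (hle hg)) x =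
      quotAut ρ N h (quotMapHom N N' hle x) := fun x =>
  QuotientGroup.induction_on x fun _ => rfl

/-- The canonical map from the continuous cohomology of the pro-`p` completion of `G`
(the direct limit over normal subgroups of finite `p`-power index acting trivially on `M`
of the cohomology of the corresponding quotients) to `H^*(G, M)` is an isomorphism in
every degree. -/
def ProPCompletionCohIso (p : ℕ) (G : Type u) [Group G] (M : Type v) [AddCommGroup M]
    (ρ : G →* AddAut M) : Prop :=
  ∀ n : ℕ,
    (∀ x : groupCoh ρ n,
      ∃ (N : Subgroup G) (hN : N.Normal),
        haveI := hN
        ∃ (_ : ∃ k, N.index = p ^ k) (h1 : ∀ y ∈ N, ρ y = 1)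
          (z : groupCoh (quotAut ρ N h1) n),
          cohMap (QuotientGroup.mk' N) (quotAut ρ N h1) ρ (fun _ => rfl) n z = x) ∧
    (∀ (N : Subgroup G) (hN : N.Normal),
      haveI := hN
      ∀ (_ : ∃ k, N.index = p ^ k) (h1 : ∀ y ∈ N, ρ y = 1)
        (z : groupCoh (quotAut ρ N h1) n),
        cohMap (QuotientGroup.mk' N) (quotAut ρ N h1) ρ (fun _ => rfl) n z = 0 →
        ∃ (N' : Subgroup G) (hN' : N'.Normal),
          haveI := hN'
          ∃ (_ : ∃ k, N'.index = p ^ k) (hle : N' ≤ N),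
            cohMap (quotMapHom N N' hle) (quotAut ρ N h1)
              (quotAut ρ N' fun g hg => h1 g (hle hg))
              (quotAut_comp_quotMap ρ N N' hle h1) n z = 0)

/-- The analogue of `ProPCompletionCohIso` for the full profinite completion: the canonical
map from the continuous cohomology of the profinite completion of `G` to `H^*(G, M)` is an
isomorphism in every degree. -/
def ProfiniteCompletionCohIso (G : Type u) [Group G] (M : Type v) [AddCommGroup M]
    (ρ : G →* AddAut M) : Prop :=
  ∀ n : ℕ,
    (∀ x : groupCoh ρ n,
      ∃ (N : Subgroup G) (hN : N.Normal),
        haveI := hN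
        ∃ (_ : N.FiniteIndex) (h1 : ∀ y ∈ N, ρ y = 1)
          (z : groupCoh (quotAut ρ N h1) n),
          cohMap (QuotientGroup.mk' N) (quotAut ρ N h1) ρ (fun _ => rfl) n z = x) ∧
    (∀ (N : Subgroup G) (hN : N.Normal),
      haveI := hN
      ∀ (_ : N.FiniteIndex) (h1 : ∀ y ∈ N, ρ y = 1)
        (z : groupCoh (quotAut ρ N h1) n),
        cohMap (QuotientGroup.mk' N) (quotAut ρ N h1) ρ (fun _ => rfl) n z = 0 →
        ∃ (N' : Subgroup G) (hN' : N'.Normal),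
          haveI := hN'
          ∃ (_ : N'.FiniteIndex) (hle : N' ≤ N),
            cohMap (quotMapHom N N' hle) (quotAut ρ N h1)
              (quotAut ρ N' fun g hg => h1 g (hle hg))
              (quotAut_comp_quotMap ρ N N' hle h1) n z = 0)

/-- The class `𝒢(p)`: the pro-`p` completion map `G → Ĝ_p` induces an isomorphism
`H^*(Ĝ_p, M) → H^*(G, M)` for every discrete `Ĝ_p`-module `M` of finite `p`-power order,
i.e. for every `G`-module `M` of finite `p`-power order whose action factors through a
quotient of finite `p`-power index. -/
def InGp (p : ℕ) (G : Type u) [Group G] : Prop :=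
  ∀ (M : Type u) [AddCommGroup M] (ρ : G →* AddAut M),
    (∃ k, Nat.card M = p ^ k) →
    (∃ N : Subgroup G, N.Normal ∧ (∃ k, N.index = p ^ k) ∧ ∀ y ∈ N, ρ y = 1) →
    ProPCompletionCohIso p G M ρ

/-- The class `𝒢*(p)`: the profinite completion map `G → Ĝ` induces an isomorphism
`H^*(Ĝ, M) → H^*(G, M)` for every discrete `Ĝ`-module `M` of finite `p`-power order,
i.e. for every `G`-module `M` of finite `p`-power order whose action factors through a
quotient of finite index. -/
def InGpStar (p : ℕ) (G : Type u) [Group G] : Prop :=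
  ∀ (M : Type u) [AddCommGroup M] (ρ : G →* AddAut M),
    (∃ k, Nat.card M = p ^ k) →
    (∃ N : Subgroup G, N.Normal ∧ N.FiniteIndex ∧ ∀ y ∈ N, ρ y = 1) →
    ProfiniteCompletionCohIso G M ρ

/-- The class `ℱ𝒮`: groups having only finitely many subgroups of each finite index. -/
def InFS (G : Type u) [Group G] : Prop :=
  ∀ n : ℕ, n ≠ 0 → {H : Subgroup G | H.index = n}.Finite

/-- The class `ℱℋ`: groups `G` such that `H^n(G, M)` is finite for every finite
`G`-module `M` and every `n ≥ 0`. -/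
def InFH (G : Type u) [Group G] : Prop :=
  ∀ (M : Type u) [AddCommGroup M] [Finite M] (ρ : G →* AddAut M) (n : ℕ),
    Finite (groupCoh ρ n)

/-- An abelian group has finite torsion-free rank iff `ℚ ⊗ A` is finite dimensional. -/
def HasFiniteTorsionFreeRank (A : Type v) [CommGroup A] : Prop :=
  Module.Finite ℚ (ℚ ⊗[ℤ] (Additive A))

/-- An abelian group has finite `p`-rank (its `p`-torsion subgroup is a direct sum of
finitely many cyclic and quasicyclic groups) iff its `p`-socle is finite. -/
def HasFinitePRank (p : ℕ) (A : Type v) [CommGroup A] : Prop :=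
  {a : A | a ^ p = 1}.Finite

/-- `G` has finite abelian section rank: every abelian section of `G` has finite
torsion-free rank and finite `p`-rank for every prime `p`. -/
def IsFAR (G : Type u) [Group G] : Prop :=
  ∀ (H : Subgroup G) (A : Type u) [CommGroup A] (φ : H →* A), Surjective φ →
    HasFiniteTorsionFreeRank A ∧ ∀ p : ℕ, p.Prime → HasFinitePRank p A

/-- The Prüfer `p`-group `C_{p^∞}`: the subgroup of `p`-power order elements of `ℚ/ℤ`. -/
def pruferSubgroup (p : ℕ) : AddSubgroup (AddCircle (1 : ℚ)) where
  carrier := {x | ∃ n : ℕ, p ^ n • x = 0}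
  zero_mem' := ⟨0, smul_zero _⟩
  add_mem' := by
    rintro a b ⟨m, hm⟩ ⟨n, hn⟩
    refine ⟨m + n, ?_⟩
    have ha : p ^ (m + n) • a = 0 := by rw [pow_add, mul_comm, mul_smul, hm, smul_zero]
    have hb : p ^ (m + n) • b = 0 := by rw [pow_add, mul_smul, hn, smul_zero]
    rw [smul_add, ha, hb, add_zero]
  neg_mem' := by
    rintro a ⟨m, hm⟩
    exact ⟨m, by rw [smul_neg, hm, neg_zero]⟩

/-- `G` has a subgroup isomorphic to the Prüfer `p`-group `C_{p^∞}`. -/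
def HasPruferSubgroup (p : ℕ) (G : Type u) [Group G] : Prop :=
  ∃ H : Subgroup G, Nonempty (H ≃* Multiplicative (pruferSubgroup p))

/-- `G` has a section (quotient of a subgroup) isomorphic to the Prüfer `p`-group, i.e.
`p ∈ spec G`. -/
def HasPruferSection (p : ℕ) (G : Type u) [Group G] : Prop :=
  ∃ (H : Subgroup G) (φ : H →* Multiplicative (pruferSubgroup p)), Surjective φ

/-- `H ≤_t G`: `H` is topologically embedded in `G`, i.e. the profinite topology of `G`
induces the full profinite topology on `H`. -/
def TopEmbedded {G : Type u} [Group G] (H : Subgroup G) : Prop :=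
  ∀ K : Subgroup H, K.Normal → K.FiniteIndex →
    ∃ L : Subgroup G, L.Normal ∧ L.FiniteIndex ∧ L.subgroupOf H ≤ K

/-- `H ≤_{t(p)} G`: `H` is topologically `p`-embedded in `G`, i.e. the pro-`p` topology of
`G` induces the full pro-`p` topology on `H`. -/
def TopPEmbedded (p : ℕ) {G : Type u} [Group G] (H : Subgroup G) : Prop :=
  ∀ K : Subgroup H, K.Normal → (∃ k, K.index = p ^ k) →
    ∃ L : Subgroup G, L.Normal ∧ (∃ k, L.index = p ^ k) ∧ L.subgroupOf H ≤ K

/-- The pro-`p` topology on `G` is homogeneous: every subgroup of `G` is topologically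
`p`-embedded in `G`. -/
def PHomogeneous (p : ℕ) (G : Type u) [Group G] : Prop :=
  ∀ H : Subgroup G, TopPEmbedded p H

/-- The `p`-residual of `G`: the kernel of the pro-`p` completion map, i.e. the
intersection of all normal subgroups of finite `p`-power index. -/
def pResidual (p : ℕ) (G : Type u) [Group G] : Subgroup G :=
  ⨅ (N : Subgroup G) (_ : N.Normal) (_ : ∃ k, N.index = p ^ k), N

/-- A `p'`-group: every element has finite order coprime to `p`. -/
def IsPPrimeGroup (p : ℕ) (G : Type u) [Group G] : Prop :=
  ∀ g : G, IsOfFinOrder g ∧ Nat.Coprime (orderOf g) p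

/-- The profinite topology on `G`, with the cosets of the normal subgroups of finite index
as basic open sets. -/
def profiniteTopology (G : Type u) [Group G] : TopologicalSpace G :=
  ⨅ (N : Subgroup G) (_ : N.Normal) (_ : N.FiniteIndex),
    TopologicalSpace.induced (QuotientGroup.mk (s := N)) ⊥

lemma normal_of_le_center {G : Type u} [Group G] {A : Subgroup G}
    (hA : A ≤ Subgroup.center G) : A.Normal :=
  ⟨fun a ha g => by
    have hc := (Subgroup.mem_center_iff.mp (hA ha)) g
    have : g * a * g⁻¹ = a := by rw [hc]; group
    rwa [this]⟩

/-!
Put `m = n!` and `W₀ = G`, `W_{k+1} = [W_k, W_k] W_k^m`. Each factor `W_k / W_{k+1}` is an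
abelian section of exponent dividing `m` with finite `p`-ranks, hence finite, so `W_m` has finite
index. If `H` has index `n`, its normal core `N` has index dividing `n!`, so `G ⧸ N` is a solvable
group of order at most `m` and exponent dividing `m`. There `W_k` maps into the `k`-th derived
subgroup, which is trivial once `k ≥ |G ⧸ N|`; thus `W_m ≤ N ≤ H`, and the subgroups containing
`W_m` correspond to subgroups of the finite group `G ⧸ W_m`.
-/

section PowDerivedSeries

open scoped IsMulCommutative

variable {G : Type*} [Group G]

lemma derivedSeries_eq_bot_of_natCard_le (Q : Type*) [Group Q] [Finite Q]
    [Group.IsSolvable Q] {k : ℕ} (hk : Nat.card Q ≤ k) : derivedSeries Q k = ⊥ := by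
  -- the derived series descends strictly until it reaches `⊥`, so its index grows past `j`
  have descend : ∀ j, derivedSeries Q j = ⊥ ∨ j < (derivedSeries Q j).index := by
    intro j
    induction j with
    | zero => simp
    | succ j ih =>
      by_cases hbot : derivedSeries Q j = ⊥
      · left
        rw [derivedSeries_succ, hbot, Subgroup.commutator_bot_left]
      · right
        have := ih.resolve_left hbot
        have := Subgroup.index_strictAnti (Group.IsSolvable.commutator_lt_of_ne_bot hbot)
        rw [derivedSeries_succ]
        omega
  refine le_bot_iff.1 <| (derivedSeries_antitone (G := Q) hk).trans ?_
  refine ((descend _).resolve_right fun hlt => ?_).le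
  exact hlt.not_ge (Nat.le_of_dvd Nat.card_pos (Subgroup.index_dvd_card _))

lemma _root_.Subgroup.index_normalCore_dvd_factorial (H : Subgroup G) [H.FiniteIndex] :
    H.normalCore.index ∣ H.index.factorial := by
  rw [Subgroup.normalCore_eq_ker, Subgroup.index_ker, Subgroup.index_eq_card, ← Nat.card_perm]
  exact Subgroup.card_subgroup_dvd_card _

lemma _root_.Subgroup.finite_setOf_le (N : Subgroup G) [N.Normal] [N.FiniteIndex] :
    {H : Subgroup G | N ≤ H}.Finite :=
  Set.finite_coe_iff.1 (.of_equiv _ (QuotientGroup.comapMk'OrderIso N).toEquiv)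

lemma finite_of_pow_eq_one_of_hasFinitePRank (A : Type*) [CommGroup A] {m : ℕ} (hm : m ≠ 0)
    (hexp : ∀ a : A, a ^ m = 1) (hrank : ∀ p, p.Prime → HasFinitePRank p A) : Finite A := by
  induction m using induction_on_primes generalizing A with
  | zero => exact absurd rfl hm
  | one =>
    have : Subsingleton A := ⟨fun a b => by rw [← pow_one a, hexp, ← pow_one b, hexp]⟩
    infer_instance
  | prime_mul p m hp ih =>
    -- `a ↦ a ^ p` has the `p`-socle as kernel and a range of exponent dividing `m`
    let φ : A →* A := powMonoidHom p
    have : Finite φ.ker := (hrank p hp).to_subtype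
    have : Finite φ.range := by
      refine ih φ.range (right_ne_zero_of_mul hm) ?_ fun q hq => ?_
      · rintro ⟨_, a, rfl⟩
        exact Subtype.ext <| by simp [φ, ← pow_mul, hexp]
      · have : {b : φ.range | b ^ q = 1} = Subtype.val ⁻¹' {a : A | a ^ q = 1} := by
          ext b
          simp [← Subtype.coe_inj]
        rw [HasFinitePRank, this]
        exact (hrank q hq).preimage Subtype.val_injective.injOn
    have : Finite (A ⧸ φ.ker) :=
      .of_equiv _ (QuotientGroup.quotientKerEquivRange φ).symm.toEquiv
    exact .of_subgroup_quotient φ.ker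

def powCommutator (m : ℕ) (X : Subgroup G) : Subgroup G :=
  ⁅X, X⁆ ⊔ Subgroup.closure ((· ^ m) '' X)

lemma commutator_le_powCommutator (m : ℕ) (X : Subgroup G) : ⁅X, X⁆ ≤ powCommutator m X :=
  le_sup_left

lemma pow_mem_powCommutator (m : ℕ) {X : Subgroup G} {a : G} (ha : a ∈ X) :
    a ^ m ∈ powCommutator m X :=
  le_sup_right (a := ⁅X, X⁆) (Subgroup.subset_closure ⟨a, ha, rfl⟩)

lemma map_powCommutator {G' : Type*} [Group G'] (f : G →* G') (m : ℕ) (X : Subgroup G) :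
    (powCommutator m X).map f = powCommutator m (X.map f) := by
  simp only [powCommutator, Subgroup.map_sup, Subgroup.map_commutator, MonoidHom.map_closure,
    Subgroup.coe_map, Set.image_image, map_pow]

lemma powCommutator_eq_commutator (m : ℕ) (hexp : ∀ g : G, g ^ m = 1) (X : Subgroup G) :
    powCommutator m X = ⁅X, X⁆ := by
  refine sup_eq_left.2 <| (Subgroup.closure_le _).2 ?_
  rintro _ ⟨a, -, rfl⟩
  simp only [SetLike.mem_coe, hexp a, one_mem]

instance powCommutator_characteristic (m : ℕ) (X : Subgroup G) [X.Characteristic] :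
    (powCommutator m X).Characteristic :=
  Subgroup.characteristic_iff_map_eq.2 fun ϕ => by
    rw [map_powCommutator, Subgroup.characteristic_iff_map_eq.1 ‹_› ϕ]

variable (G) in
def powDerivedSeries (m : ℕ) : ℕ → Subgroup G
  | 0 => ⊤
  | k + 1 => powCommutator m (powDerivedSeries m k)

instance powDerivedSeries_characteristic (m k : ℕ) :
    (powDerivedSeries G m k).Characteristic := by
  induction k with
  | zero => exact Subgroup.topCharacteristic
  | succ k _ => exact powCommutator_characteristic m _

lemma map_powDerivedSeries_le_derivedSeries {Q : Type*} [Group Q] (f : G →* Q) {m : ℕ}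
    (hexp : ∀ q : Q, q ^ m = 1) (k : ℕ) :
    (powDerivedSeries G m k).map f ≤ derivedSeries Q k := by
  induction k with
  | zero => exact le_top
  | succ k ih =>
    rw [powDerivedSeries, map_powCommutator, powCommutator_eq_commutator m hexp,
      derivedSeries_succ]
    exact Subgroup.commutator_mono ih ih

lemma powDerivedSeries_le_of_index_dvd [Group.IsSolvable G] {m : ℕ} (hm : m ≠ 0)
    (N : Subgroup G) [N.Normal] (hN : N.index ∣ m) : powDerivedSeries G m m ≤ N := by
  have : N.FiniteIndex := ⟨fun h => hm (zero_dvd_iff.1 (h ▸ hN))⟩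
  have hcard : Nat.card (G ⧸ N) ∣ m := N.index_eq_card ▸ hN
  have hexp : ∀ q : G ⧸ N, q ^ m = 1 := fun q => by
    obtain ⟨c, rfl⟩ := hcard
    rw [pow_mul, pow_card_eq_one', one_pow]
  have hbot : derivedSeries (G ⧸ N) m = ⊥ :=
    derivedSeries_eq_bot_of_natCard_le _ (Nat.le_of_dvd (Nat.pos_of_ne_zero hm) hcard)
  rw [← QuotientGroup.ker_mk' N, ← Subgroup.map_eq_bot_iff, ← le_bot_iff, ← hbot]
  exact map_powDerivedSeries_le_derivedSeries _ hexp m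

namespace IsFAR

lemma relIndex_powCommutator_ne_zero (hFAR : IsFAR G) {m : ℕ} (hm : m ≠ 0) (X : Subgroup G) :
    (powCommutator m X).relIndex X ≠ 0 := by
  set N := (powCommutator m X).subgroupOf X
  have hcomm : commutator X ≤ N := by
    refine Subgroup.map_le_iff_le_comap.1 ?_
    rw [Subgroup.map_subtype_commutator]
    exact commutator_le_powCommutator m X
  have : N.Normal := .of_commutator_le (G := X) hcomm
  have : IsMulCommutative (X ⧸ N) :=
    Subgroup.Normal.quotient_commutative_iff_commutator_le.2 hcomm
  have hexp : ∀ q : X ⧸ N, q ^ m = 1 := by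
    refine fun q => QuotientGroup.induction_on q fun a => ?_
    rw [← QuotientGroup.mk_pow, QuotientGroup.eq_one_iff, Subgroup.mem_subgroupOf,
      Subgroup.coe_pow]
    exact pow_mem_powCommutator m a.2
  have : Finite (X ⧸ N) := finite_of_pow_eq_one_of_hasFinitePRank _ hm hexp fun p hp =>
    (hFAR X _ (QuotientGroup.mk' N) (QuotientGroup.mk'_surjective N)).2 p hp
  exact Subgroup.index_ne_zero_of_finite

lemma finiteIndex_powDerivedSeries (hFAR : IsFAR G) {m : ℕ} (hm : m ≠ 0) (k : ℕ) :
    (powDerivedSeries G m k).FiniteIndex := by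
  rw [Subgroup.finiteIndex_iff, ← Subgroup.relIndex_top_right]
  induction k with
  | zero => simp [powDerivedSeries]
  | succ k ih =>
    exact Subgroup.relIndex_ne_zero_trans (hFAR.relIndex_powCommutator_ne_zero hm _) ih

end IsFAR

end PowDerivedSeries

/-- Proposition 2.3: every solvable FAR-group belongs to `ℱ𝒮`. -/
theorem solvable_FAR_mem_FS (G : Type u) [Group G] (hsol : IsSolvable G)
    (hFAR : IsFAR G) : InFS G := by
  have : Group.IsSolvable G := hsol
  intro n hn
  have hm : n.factorial ≠ 0 := n.factorial_ne_zero
  have := hFAR.finiteIndex_powDerivedSeries hm n.factorial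
  refine (Subgroup.finite_setOf_le (powDerivedSeries G n.factorial n.factorial)).subset
    fun H (hH : H.index = n) => ?_
  have : H.FiniteIndex := ⟨hH.symm ▸ hn⟩
  exact (powDerivedSeries_le_of_index_dvd hm H.normalCore
    (hH ▸ H.index_normalCore_dvd_factorial)).trans H.normalCore_le

end GoodProfinite
end

section
/- Let p be a prime, G a group, and S a section of G (a quotient of a subgroup of G). If the pro-p topology on G is homogeneous, then the pro-p topology on S is homogeneous. -/
/-!
Common definitions for formalizing "Cohomology and profinite topologies for solvable
groups of finite rank" (K. Lorensen).

Group cohomology is defined via inhomogeneous cochains.  The continuous cohomology of the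
pro-`p` (resp. profinite) completion of `G` with coefficients in a finite discrete module is
the direct limit, over the normal subgroups `N` of finite `p`-power (resp. finite) index
acting trivially on the module, of the cohomology of the quotients `G ⧸ N`; accordingly, the
statement that the completion map induces an isomorphism on cohomology is rendered as:
the canonical (inflation) maps from this directed system to `H^*(G, M)` are jointly
surjective, and any class of the system killed in `H^*(G, M)` is killed at a deeper level of
the system.
-/

open Function TensorProduct

universe u v

namespace GoodProfinite

variable {G H : Type u} {M : Type v}

/-!
Pull a normal subgroup of `p`-power index in a subgroup of the section back along
`H → H ⧸ K`, where the index is unchanged, and realise the preimage as a subgroup of `G`;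
homogeneity of `G` cuts it out by some `L ⊴ G` of `p`-power index, and the image of
`L ∩ H` in the section does the job, its index dividing that of `L`.
-/

section

variable {p : ℕ}

lemma exists_eq_pow_of_dvd_prime_pow (hp : p.Prime) {n k : ℕ} (h : n ∣ p ^ k) :
    ∃ j, n = p ^ j :=
  ((Nat.dvd_prime_pow hp).mp h).imp fun _ hj => hj.2

lemma TopPEmbedded.of_map_subtype (hp : p.Prime) {G : Type u} [Group G] {H : Subgroup G}
    {A : Subgroup H} (hA : TopPEmbedded p (A.map H.subtype)) : TopPEmbedded p A := by
  intro K hK ⟨k, hk⟩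
  let e : A ≃* A.map H.subtype := A.equivMapOfInjective H.subtype H.subtype_injective
  obtain ⟨L, hL, ⟨m, hm⟩, hLK⟩ := hA (K.comap e.symm.toMonoidHom) (hK.comap _)
    ⟨k, by rw [Subgroup.index_comap_of_surjective _ e.symm.surjective, hk]⟩
  refine ⟨L.subgroupOf H, hL.subgroupOf H,
    exists_eq_pow_of_dvd_prime_pow hp (hm ▸ Subgroup.relIndex_dvd_index_of_normal L H), ?_⟩
  intro x hx
  have hex : e x ∈ L.subgroupOf (A.map H.subtype) := hx
  simpa using hLK hex

lemma TopPEmbedded.of_comap (hp : p.Prime) {G₁ G₂ : Type u} [Group G₁] [Group G₂]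
    {φ : G₁ →* G₂} (hφ : Surjective φ) {H : Subgroup G₂} (hH : TopPEmbedded p (H.comap φ)) :
    TopPEmbedded p H := by
  intro K hK ⟨k, hk⟩
  let ψ := φ.subgroupComap H
  have hψ : Surjective ψ := φ.subgroupComap_surjective_of_surjective H hφ
  obtain ⟨L, hL, ⟨m, hm⟩, hLK⟩ := hH (K.comap ψ) (hK.comap ψ)
    ⟨k, by rw [Subgroup.index_comap_of_surjective _ hψ, hk]⟩
  refine ⟨L.map φ, hL.map φ hφ,
    exists_eq_pow_of_dvd_prime_pow hp (hm ▸ Subgroup.index_map_dvd L hφ), ?_⟩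
  rintro ⟨y, hyH⟩ ⟨l, hlL, rfl⟩
  have hlH : l ∈ H.comap φ := hyH
  exact hLK (x := ⟨l, hlH⟩) hlL

lemma PHomogeneous.subgroup (hp : p.Prime) {G : Type u} [Group G] (hG : PHomogeneous p G)
    (H : Subgroup G) : PHomogeneous p H :=
  fun A => (hG (A.map H.subtype)).of_map_subtype hp

lemma PHomogeneous.of_surjective (hp : p.Prime) {G₁ G₂ : Type u} [Group G₁] [Group G₂]
    {φ : G₁ →* G₂} (hφ : Surjective φ) (h : PHomogeneous p G₁) : PHomogeneous p G₂ :=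
  fun H => (h (H.comap φ)).of_comap hp hφ

end

/-- Lemma 3.3: any section of a `p`-homogeneous group is `p`-homogeneous. -/
theorem section_pHomogeneous (p : ℕ) (hp : p.Prime) (G : Type u) [Group G]
    (hG : PHomogeneous p G) (H : Subgroup G) (K : Subgroup H) (hK : K.Normal) :
    haveI := hK
    PHomogeneous p (↥H ⧸ K) :=
  haveI := hK
  (hG.subgroup hp H).of_surjective hp (QuotientGroup.mk'_surjective K)

end GoodProfinite
end

section
/- Let p be a prime and let 1 → N → G → Q → 1 be a short exact sequence of groups such that N is topologically p-embedded in G and G belongs to the class ℱ𝒮. If the pro-p topologies on both N and Q are homogeneous, then the pro-p topology on G is homogeneous. -/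
/-!
Common definitions for formalizing "Cohomology and profinite topologies for solvable
groups of finite rank" (K. Lorensen).

Group cohomology is defined via inhomogeneous cochains.  The continuous cohomology of the
pro-`p` (resp. profinite) completion of `G` with coefficients in a finite discrete module is
the direct limit, over the normal subgroups `N` of finite `p`-power (resp. finite) index
acting trivially on the module, of the cohomology of the quotients `G ⧸ N`; accordingly, the
statement that the completion map induces an isomorphism on cohomology is rendered as:
the canonical (inflation) maps from this directed system to `H^*(G, M)` are jointly
surjective, and any class of the system killed in `H^*(G, M)` is killed at a deeper level of
the system.
-/

open Function TensorProduct

universe u v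

namespace GoodProfinite

variable {G H : Type u} {M : Type v}

/-!
Let `R = ker π` and let `K` be normal of `p`-power index in `H ≤ G`. Homogeneity of `R`, applied
to `K ∩ R ≤ H ∩ R`, together with `R ≤_{t(p)} G` yields `M ◁ G` of `p`-power index with
`M ∩ H ∩ R ≤ K`. Homogeneity of `Q`, applied to the images of `K ∩ M ≤ H ∩ M`, yields `L ◁ G` of
`p`-power index with `L ∩ H ∩ M ≤ (K ∩ M) R`. An element of `M ∩ L ∩ H` is then `y r` with
`y ∈ K` and `r ∈ M ∩ H ∩ R ≤ K`.
-/
lemma exists_eq_prime_pow_of_dvd {p m n : ℕ} (hp : p.Prime) (h : n ∣ m)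
    (hm : ∃ k, m = p ^ k) : ∃ j, n = p ^ j := by
  obtain ⟨k, rfl⟩ := hm
  obtain ⟨j, -, hj⟩ := (Nat.dvd_prime_pow hp).mp h
  exact ⟨j, hj⟩

section

variable [Group G] {p : ℕ}

lemma relIndex_dvd_relIndex_of_le {K H S : Subgroup G} (hn : (K.subgroupOf H).Normal)
    (hS : S ≤ H) : K.relIndex S ∣ K.relIndex H := by
  rw [← Subgroup.relIndex_subgroupOf hS]
  exact Subgroup.relIndex_dvd_index_of_normal _ _

lemma subgroupOf_map_subtype_self {R : Subgroup G} (L : Subgroup R) :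
    (L.map R.subtype).subgroupOf R = L :=
  Subgroup.comap_map_eq_self_of_injective R.subtype_injective L

lemma index_inf_dvd_of_normal (A B : Subgroup G) [A.Normal] :
    (A ⊓ B).index ∣ A.index * B.index := by
  rw [← Subgroup.relIndex_mul_index (inf_le_right : A ⊓ B ≤ B), Subgroup.inf_relIndex_right]
  exact mul_dvd_mul_right (Subgroup.relIndex_dvd_index_of_normal A B) _

theorem topPEmbedded_iff {H : Subgroup G} :
    TopPEmbedded p H ↔ ∀ K ≤ H, (∀ k h, k ∈ K → h ∈ H → h * k * h⁻¹ ∈ K) →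
      (∃ j, K.relIndex H = p ^ j) →
        ∃ L : Subgroup G, L.Normal ∧ (∃ j, L.index = p ^ j) ∧ L ⊓ H ≤ K := by
  constructor
  · intro h K hKH hconj hK
    obtain ⟨L, hLn, hLi, hle⟩ := h _ ((Subgroup.normal_subgroupOf_iff hKH).mpr hconj) hK
    exact ⟨L, hLn, hLi, fun x hx => hle (show (⟨x, hx.2⟩ : H) ∈ L.subgroupOf H from hx.1)⟩
  · intro h K hKn hK
    obtain ⟨L, hLn, hLi, hle⟩ := h (K.map H.subtype) (Subgroup.map_subtype_le K)
      (by
        rintro _ h ⟨k, hk, rfl⟩ hh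
        exact ⟨⟨h, hh⟩ * k * ⟨h, hh⟩⁻¹, hKn.conj_mem k hk _, rfl⟩)
      (by rwa [Subgroup.relIndex, subgroupOf_map_subtype_self])
    refine ⟨L, hLn, hLi, fun x hx => ?_⟩
    rw [← subgroupOf_map_subtype_self K]
    exact hle ⟨hx, x.2⟩

theorem PHomogeneous.of_surjective_s18 (hp : p.Prime) {N A : Type u} [Group N] [Group A]
    (f : N →* A) (hf : Surjective f) (hN : PHomogeneous p N) : PHomogeneous p A := by
  intro H
  rw [topPEmbedded_iff]
  intro K hKH hconj hK
  obtain ⟨L, hLn, hLi, hle⟩ := topPEmbedded_iff.mp (hN (H.comap f)) (K.comap f)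
    (Subgroup.comap_mono hKH)
    (fun k h hk hh => by simpa using hconj _ _ hk hh)
    (by rwa [Subgroup.relIndex_comap, Subgroup.map_comap_eq_self_of_surjective hf])
  refine ⟨L.map f, hLn.map f hf, exists_eq_prime_pow_of_dvd hp (Subgroup.index_map_dvd L hf) hLi,
    ?_⟩
  rintro _ ⟨⟨l, hl, rfl⟩, hlH⟩
  exact hle ⟨hl, hlH⟩

theorem TopPEmbedded.exists_inf_inf_le (hp : p.Prime) {R : Subgroup G} (hR : TopPEmbedded p R)
    (hRhom : PHomogeneous p R) {H K : Subgroup G} (hKH : K ≤ H)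
    (hconj : ∀ k h, k ∈ K → h ∈ H → h * k * h⁻¹ ∈ K)
    (hK : ∃ j, K.relIndex H = p ^ j) :
    ∃ M : Subgroup G, M.Normal ∧ (∃ j, M.index = p ^ j) ∧ M ⊓ H ⊓ R ≤ K := by
  have hKR : ∃ j, (K.subgroupOf R).relIndex (H.subgroupOf R) = p ^ j := by
    rw [← Subgroup.comap_subtype, Subgroup.relIndex_comap, Subgroup.subgroupOf_map_subtype]
    exact exists_eq_prime_pow_of_dvd hp (relIndex_dvd_relIndex_of_le
      ((Subgroup.normal_subgroupOf_iff hKH).mpr hconj) inf_le_left) hK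
  obtain ⟨L, hLn, hLi, hLle⟩ := topPEmbedded_iff.mp (hRhom (H.subgroupOf R))
    (K.subgroupOf R) (fun x hx => hKH hx) (fun k h hk hh => hconj _ _ hk hh) hKR
  obtain ⟨M, hMn, hMi, hMle⟩ := topPEmbedded_iff.mp hR (L.map R.subtype)
    (Subgroup.map_subtype_le L)
    (by
      rintro _ h ⟨l, hl, rfl⟩ hh
      exact ⟨⟨h, hh⟩ * l * ⟨h, hh⟩⁻¹, hLn.conj_mem l hl _, rfl⟩)
    (by rwa [Subgroup.relIndex, subgroupOf_map_subtype_self])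
  refine ⟨M, hMn, hMi, ?_⟩
  rintro x ⟨⟨hxM, hxH⟩, hxR⟩
  obtain ⟨l, hl, rfl⟩ := hMle ⟨hxM, hxR⟩
  exact hLle ⟨hl, hxH⟩

theorem PHomogeneous.exists_inf_le_sup_ker (hp : p.Prime) {Q : Type u} [Group Q]
    (hQ : PHomogeneous p Q) (π : G →* Q) {H K : Subgroup G} (hKH : K ≤ H)
    (hconj : ∀ k h, k ∈ K → h ∈ H → h * k * h⁻¹ ∈ K)
    (hK : ∃ j, K.relIndex H = p ^ j) :
    ∃ L : Subgroup G, L.Normal ∧ (∃ j, L.index = p ^ j) ∧ L ⊓ H ≤ K ⊔ π.ker := by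
  obtain ⟨LQ, hLQn, hLQi, hLQle⟩ := topPEmbedded_iff.mp (hQ (H.map π)) (K.map π)
    (Subgroup.map_mono hKH)
    (by
      rintro _ _ ⟨k, hk, rfl⟩ ⟨h, hh, rfl⟩
      exact ⟨h * k * h⁻¹, hconj k h hk hh, by simp⟩)
    (by
      rw [← Subgroup.relIndex_comap, Subgroup.comap_map_eq]
      exact exists_eq_prime_pow_of_dvd hp (Subgroup.relIndex_dvd_of_le_left H le_sup_left) hK)
  refine ⟨LQ.comap π, hLQn.comap π, exists_eq_prime_pow_of_dvd hp ?_ hLQi, ?_⟩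
  · rw [Subgroup.index_comap]
    exact Subgroup.relIndex_dvd_index_of_normal LQ _
  · rw [← Subgroup.comap_map_eq]
    exact fun x hx => hLQle ⟨hx.1, x, hx.2, rfl⟩

theorem PHomogeneous.of_ker (hp : p.Prime) {Q : Type u} [Group Q] (π : G →* Q)
    (htop : TopPEmbedded p π.ker) (hker : PHomogeneous p π.ker) (hQ : PHomogeneous p Q) :
    PHomogeneous p G := by
  intro H
  rw [topPEmbedded_iff]
  intro K hKH hconj hK
  obtain ⟨M, hMn, ⟨a, hMa⟩, hMle⟩ := htop.exists_inf_inf_le hp hker hKH hconj hK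
  obtain ⟨L, hLn, ⟨b, hLb⟩, hLle⟩ := hQ.exists_inf_le_sup_ker hp π (K := K ⊓ (M ⊓ H))
    inf_le_right
    (fun k h hk hh =>
      ⟨hconj k h hk.1 hh.2, (M ⊓ H).mul_mem ((M ⊓ H).mul_mem hh hk.2) ((M ⊓ H).inv_mem hh)⟩)
    (by
      rw [Subgroup.inf_relIndex_right]
      exact exists_eq_prime_pow_of_dvd hp (relIndex_dvd_relIndex_of_le
        ((Subgroup.normal_subgroupOf_iff hKH).mpr hconj) inf_le_right) hK)
  have := hMn
  refine ⟨M ⊓ L, inferInstance, exists_eq_prime_pow_of_dvd hp (index_inf_dvd_of_normal M L)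
    ⟨a + b, by rw [hMa, hLb, pow_add]⟩, ?_⟩
  rintro x ⟨⟨hxM, hxL⟩, hxH⟩
  obtain ⟨y, hy, r, hr, rfl⟩ := Subgroup.mem_sup_of_normal_right.mp (hLle ⟨hxL, hxM, hxH⟩)
  have hrK : r ∈ K :=
    hMle ⟨⟨(M.mul_mem_cancel_left hy.2.1).mp hxM, (H.mul_mem_cancel_left hy.2.2).mp hxH⟩, hr⟩
  exact K.mul_mem hy.1 hrK

end

theorem pHomogeneous_extension_general (p : ℕ) (hp : p.Prime) (N G Q : Type u) [Group N]
    [Group G] [Group Q] (ι : N →* G) (π : G →* Q)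
    (hex : ι.range = π.ker) (htop : TopPEmbedded p ι.range)
    (hN : PHomogeneous p N) (hQ : PHomogeneous p Q) : PHomogeneous p G := by
  have hR : PHomogeneous p π.ker :=
    hex ▸ hN.of_surjective_s18 hp ι.rangeRestrict ι.rangeRestrict_surjective
  exact PHomogeneous.of_ker hp π (hex ▸ htop) hR hQ

/-- Lemma 3.5: if `1 → N → G → Q → 1` is exact with `N ≤_{t(p)} G` and `G ∈ ℱ𝒮`, and
both `N` and `Q` are `p`-homogeneous, then so is `G`. -/
theorem pHomogeneous_extension (p : ℕ) (hp : p.Prime) (N G Q : Type u) [Group N]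
    [Group G] [Group Q] (ι : N →* G) (π : G →* Q) (hι : Injective ι) (hπ : Surjective π)
    (hex : ι.range = π.ker) (htop : TopPEmbedded p ι.range) (hFS : InFS G)
    (hN : PHomogeneous p N) (hQ : PHomogeneous p Q) : PHomogeneous p G :=
  pHomogeneous_extension_general p hp N G Q ι π hex htop hN hQ

end GoodProfinite
end
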